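/- The Ewens sampling formula defines a probability distribution on set partitions: for every n ≥ 1 and θ > 0, the sum over all set partitions p = {C_1,…,C_k} of {1,…,n} of θ^k · Γ(θ)/Γ(θ+n) · ∏_{j=1}^{k} (|C_j| - 1)! equals 1. -/

import Mathlib

/-!
Adding a new element `a` to a set partition of `s` either creates the block `{a}`, which multiplies
the weight `θ ^ k * ∏ (#C - 1)!` by `θ`, or puts `a` into an existing block `C`, which multiplies
it by `#C`. Since the block sizes add up to `#s`, summing over these choices multiplies the total
weight by `θ + #s`. So the weights of the partitions of an `n`-element set add up to the rising
factorial `θ (θ + 1) ⋯ (θ + n - 1) = Γ(θ + n) / Γ(θ)`.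
-/

open Finset Nat

namespace Finpartition

variable {α : Type*} [DecidableEq α] {s : Finset α} {a : α}

lemma notMem_of_mem_parts (P : Finpartition s) (ha : a ∉ s) {C : Finset α}
    (hC : C ∈ P.parts) : a ∉ C :=
  fun h ↦ ha (P.le hC h)

lemma sup_erase_parts (P : Finpartition s) {C : Finset α} (hC : C ∈ P.parts) :
    (P.parts.erase C).sup id = s \ C := by
  ext x
  simp only [mem_sup, mem_erase, id, mem_sdiff]
  constructor
  · rintro ⟨D, ⟨hDC, hD⟩, hx⟩
    exact ⟨P.le hD hx, fun hxC ↦ hDC (P.eq_of_mem_parts hD hC hx hxC)⟩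
  · rintro ⟨hx, hxC⟩
    obtain ⟨D, hD, hxD⟩ := P.exists_mem hx
    exact ⟨D, ⟨fun h ↦ hxC (h ▸ hxD), hD⟩, hxD⟩

def insertSingleton (P : Finpartition s) (ha : a ∉ s) : Finpartition (insert a s) :=
  P.extend (b := {a}) (singleton_ne_empty a) (disjoint_singleton_right.2 ha)
    (by rw [sup_eq_union, union_comm, ← insert_eq])

def insertIntoPart (P : Finpartition s) (ha : a ∉ s) {C : Finset α} (hC : C ∈ P.parts) :
    Finpartition (insert a s) :=
  (P.ofSubset (erase_subset C P.parts) (P.sup_erase_parts hC)).extend (b := insert a C)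
    (insert_ne_empty a C)
    (disjoint_insert_right.2 ⟨fun h ↦ ha (mem_sdiff.1 h).1, sdiff_disjoint⟩)
    (by rw [sup_eq_union, union_insert, sdiff_union_of_subset (P.le hC)])

lemma parts_insertSingleton (P : Finpartition s) (ha : a ∉ s) :
    (P.insertSingleton ha).parts = insert {a} P.parts := rfl

lemma parts_insertIntoPart (P : Finpartition s) (ha : a ∉ s) {C : Finset α}
    (hC : C ∈ P.parts) :
    (P.insertIntoPart ha hC).parts = insert (insert a C) (P.parts.erase C) := rfl

lemma part_insertSingleton_self (P : Finpartition s) (ha : a ∉ s) :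
    (P.insertSingleton ha).part a = {a} :=
  part_eq_of_mem _ (mem_insert_self _ _) (mem_singleton_self a)

lemma part_insertIntoPart_self (P : Finpartition s) (ha : a ∉ s) {C : Finset α}
    (hC : C ∈ P.parts) : (P.insertIntoPart ha hC).part a = insert a C :=
  part_eq_of_mem _ (mem_insert_self _ _) (mem_insert_self a C)

def removeElem (Q : Finpartition (insert a s)) (ha : a ∉ s) : Finpartition s :=
  (Q.avoid {a}).copy <| by
    rw [insert_sdiff_of_mem s (mem_singleton_self a), sdiff_singleton_eq_erase,
      erase_eq_self.2 ha]

lemma parts_removeElem (Q : Finpartition (insert a s)) (ha : a ∉ s) :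
    (Q.removeElem ha).parts =
      (insert ((Q.part a).erase a) (Q.parts.erase (Q.part a))).erase ∅ := by
  have hmem : Q.part a ∈ Q.parts := Q.part_mem.2 (mem_insert_self a s)
  have hid : ∀ D ∈ Q.parts.erase (Q.part a), D \ {a} = D := fun D hD ↦ by
    rw [sdiff_singleton_eq_erase, erase_eq_self]
    exact fun haD ↦ (mem_erase.1 hD).1 (Q.part_eq_of_mem (mem_of_mem_erase hD) haD).symm
  change (Q.parts.image (· \ {a})).erase ∅ = _
  conv_lhs => rw [← insert_erase hmem, image_insert, image_congr hid, image_id',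
    sdiff_singleton_eq_erase]

lemma removeElem_insertSingleton (P : Finpartition s) (ha : a ∉ s) :
    (P.insertSingleton ha).removeElem ha = P := by
  have hP : {a} ∉ P.parts := fun h ↦ P.notMem_of_mem_parts ha h (mem_singleton_self a)
  ext1
  rw [parts_removeElem, part_insertSingleton_self, erase_singleton, parts_insertSingleton,
    erase_insert hP, erase_insert P.empty_notMem_parts]

lemma removeElem_insertIntoPart (P : Finpartition s) (ha : a ∉ s) {C : Finset α}
    (hC : C ∈ P.parts) : (P.insertIntoPart ha hC).removeElem ha = P := by
  have haC : insert a C ∉ P.parts.erase C :=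
    fun h ↦ P.notMem_of_mem_parts ha (mem_of_mem_erase h) (mem_insert_self a C)
  ext1
  rw [parts_removeElem, part_insertIntoPart_self, parts_insertIntoPart, erase_insert haC,
    erase_insert (P.notMem_of_mem_parts ha hC), insert_erase hC,
    erase_eq_self.2 P.empty_notMem_parts]

lemma eq_insertSingleton_removeElem (Q : Finpartition (insert a s)) (ha : a ∉ s)
    (hQ : Q.part a = {a}) : Q = (Q.removeElem ha).insertSingleton ha := by
  have hmem : {a} ∈ Q.parts := hQ ▸ Q.part_mem.2 (mem_insert_self a s)
  ext1
  rw [parts_insertSingleton, parts_removeElem, hQ, erase_singleton,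
    erase_insert fun h ↦ Q.empty_notMem_parts (mem_of_mem_erase h), insert_erase hmem]

lemma exists_eq_insertIntoPart_removeElem (Q : Finpartition (insert a s)) (ha : a ∉ s)
    (hQ : Q.part a ≠ {a}) :
    ∃ hC : (Q.part a).erase a ∈ (Q.removeElem ha).parts,
      Q = (Q.removeElem ha).insertIntoPart ha hC := by
  have hmem : Q.part a ∈ Q.parts := Q.part_mem.2 (mem_insert_self a s)
  have haQ : a ∈ Q.part a := Q.mem_part (mem_insert_self a s)
  obtain ⟨b, hb⟩ : ((Q.part a).erase a).Nonempty := by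
    rw [nonempty_iff_ne_empty, Ne, erase_eq_empty_iff, not_or]
    exact ⟨(Q.nonempty_of_mem_parts hmem).ne_empty, hQ⟩
  have hnotMem : (Q.part a).erase a ∉ Q.parts := fun h ↦
    notMem_erase a _ (Q.eq_of_mem_parts h hmem hb (mem_of_mem_erase hb) ▸ haQ)
  have hparts :
      (Q.removeElem ha).parts = insert ((Q.part a).erase a) (Q.parts.erase (Q.part a)) := by
    rw [parts_removeElem, erase_eq_self, mem_insert, not_or]
    exact ⟨fun h ↦ notMem_empty b (h ▸ hb),
      fun h ↦ Q.empty_notMem_parts (mem_of_mem_erase h)⟩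
  refine ⟨hparts ▸ mem_insert_self _ _, ?_⟩
  ext1
  rw [parts_insertIntoPart, insert_erase haQ, hparts,
    erase_insert fun h ↦ hnotMem (mem_of_mem_erase h), insert_erase hmem]

def insertElem (ha : a ∉ s) :
    (Σ P : Finpartition s, Option P.parts) → Finpartition (insert a s)
  | ⟨P, none⟩ => P.insertSingleton ha
  | ⟨P, some C⟩ => P.insertIntoPart ha C.2

lemma removeElem_insertElem (ha : a ∉ s) (x : Σ P : Finpartition s, Option P.parts) :
    (insertElem ha x).removeElem ha = x.1 := by
  obtain ⟨P, _ | C⟩ := x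
  · exact P.removeElem_insertSingleton ha
  · exact P.removeElem_insertIntoPart ha C.2

lemma insertElem_injective (ha : a ∉ s) : Function.Injective (insertElem ha) := by
  rintro ⟨P, o⟩ ⟨P', o'⟩ h
  obtain rfl : P = P' := by
    simpa only [removeElem_insertElem] using congrArg (removeElem · ha) h
  have hpart := congrArg (part · a) h
  have hC (C : P.parts) : insert a C.1 ≠ {a} := fun hCa ↦ by
    obtain ⟨b, hb⟩ := P.nonempty_of_mem_parts C.2
    exact P.notMem_of_mem_parts ha C.2 (mem_singleton.1 (hCa ▸ mem_insert_of_mem hb) ▸ hb)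
  rcases o with _ | C <;> rcases o' with _ | C' <;>
    simp only [insertElem, part_insertSingleton_self, part_insertIntoPart_self] at hpart
  · rfl
  · exact absurd hpart.symm (hC C')
  · exact absurd hpart (hC C)
  · obtain rfl : C = C' := Subtype.ext <| by
      rw [← erase_insert (P.notMem_of_mem_parts ha C.2), hpart,
        erase_insert (P.notMem_of_mem_parts ha C'.2)]
    rfl

lemma insertElem_surjective (ha : a ∉ s) : Function.Surjective (insertElem ha) := by
  intro Q
  by_cases hQ : Q.part a = {a}
  · exact ⟨⟨Q.removeElem ha, none⟩, (Q.eq_insertSingleton_removeElem ha hQ).symm⟩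
  · obtain ⟨hC, hQ'⟩ := Q.exists_eq_insertIntoPart_removeElem ha hQ
    exact ⟨⟨Q.removeElem ha, some ⟨_, hC⟩⟩, hQ'.symm⟩

lemma insertElem_bijective (ha : a ∉ s) : Function.Bijective (insertElem ha) :=
  ⟨insertElem_injective ha, insertElem_surjective ha⟩

section EwensWeight

variable {R : Type*} [CommSemiring R]

def ewensWeight (θ : R) (P : Finpartition s) : R :=
  θ ^ #P.parts * ∏ C ∈ P.parts, ((#C - 1)! : R)

lemma ewensWeight_insertSingleton (θ : R) (P : Finpartition s) (ha : a ∉ s) :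
    ewensWeight θ (P.insertSingleton ha) = θ * ewensWeight θ P := by
  have hP : {a} ∉ P.parts := fun h ↦ P.notMem_of_mem_parts ha h (mem_singleton_self a)
  rw [ewensWeight, ewensWeight, parts_insertSingleton, card_insert_of_notMem hP,
    prod_insert hP, card_singleton, Nat.sub_self, factorial_zero, cast_one, one_mul, pow_succ]
  ring

lemma ewensWeight_insertIntoPart (θ : R) (P : Finpartition s) (ha : a ∉ s) {C : Finset α}
    (hC : C ∈ P.parts) : ewensWeight θ (P.insertIntoPart ha hC) = #C * ewensWeight θ P := by
  have haC : insert a C ∉ P.parts.erase C :=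
    fun h ↦ P.notMem_of_mem_parts ha (mem_of_mem_erase h) (mem_insert_self a C)
  have hcard : #C * (#C - 1)! = (#(insert a C) - 1)! := by
    rw [card_insert_of_notMem (P.notMem_of_mem_parts ha hC), Nat.add_sub_cancel,
      mul_factorial_pred (P.nonempty_of_mem_parts hC).card_pos.ne']
  rw [ewensWeight, ewensWeight, parts_insertIntoPart, card_insert_of_notMem haC,
    card_erase_add_one hC, prod_insert haC, ← mul_prod_erase _ _ hC, ← hcard, cast_mul]
  ring

lemma sum_ewensWeight_insertElem (θ : R) (ha : a ∉ s) (P : Finpartition s) :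
    ∑ o : Option P.parts, ewensWeight θ (insertElem ha ⟨P, o⟩) =
      ewensWeight θ P * (θ + #s) := by
  rw [Fintype.sum_option]
  simp only [insertElem, ewensWeight_insertSingleton, ewensWeight_insertIntoPart]
  rw [sum_coe_sort P.parts (fun C ↦ (#C : R) * ewensWeight θ P), ← sum_mul, ← cast_sum,
    P.sum_card_parts]
  ring

theorem sum_ewensWeight (θ : R) (s : Finset α) :
    ∑ P : Finpartition s, ewensWeight θ P = (ascPochhammer R #s).eval θ := by
  induction s using Finset.induction_on with
  | empty =>
    have hcard : #(univ : Finset (Finpartition (∅ : Finset α))) = 1 :=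
      Fintype.card_unique (α := Finpartition (⊥ : Finset α))
    have hparts (P : Finpartition (∅ : Finset α)) : P.parts = ∅ := parts_eq_empty_iff.2 rfl
    simp [ewensWeight, hparts, hcard]
  | insert a s ha ih =>
    rw [← (insertElem_bijective ha).sum_comp, ← univ_sigma_univ, sum_sigma,
      card_insert_of_notMem ha, ascPochhammer_succ_eval, ← ih, sum_mul]
    exact sum_congr rfl fun P _ ↦ sum_ewensWeight_insertElem θ ha P

end EwensWeight

end Finpartition

theorem Real.Gamma_add_nat_eq_mul_ascPochhammer {θ : ℝ} (hθ : ∀ k : ℕ, θ ≠ -k) (n : ℕ) :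
    Gamma (θ + n) = Gamma θ * (ascPochhammer ℝ n).eval θ := by
  induction n with
  | zero => simp
  | succ n ih =>
    have hn : θ + n ≠ 0 := fun h ↦ hθ n (eq_neg_of_add_eq_zero_left h)
    rw [cast_succ, ← add_assoc, Gamma_add_one hn, ih, ascPochhammer_succ_eval]
    ring

theorem ewens_sampling_formula_sums_to_one_general (n : ℕ) (θ : ℝ)
    (hθ : 0 < θ) :
    ∑ p : Finpartition (Finset.univ : Finset (Fin n)),
      θ ^ p.parts.card * Real.Gamma θ / Real.Gamma (θ + n) *
        ∏ C ∈ p.parts, (Nat.factorial (C.card - 1) : ℝ)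
      = 1 := by
  have hθ' (k : ℕ) : θ ≠ -k := by linarith [k.cast_nonneg (α := ℝ)]
  have hΓ : Real.Gamma θ ≠ 0 := (Real.Gamma_pos_of_pos hθ).ne'
  have hpoch : (ascPochhammer ℝ n).eval θ ≠ 0 := (ascPochhammer_pos n θ hθ).ne'
  calc _ = Real.Gamma θ / Real.Gamma (θ + n) * ∑ p : Finpartition (univ : Finset (Fin n)),
          p.ewensWeight θ := by
        rw [mul_sum]
        exact sum_congr rfl fun p _ ↦ by rw [Finpartition.ewensWeight]; ring
    _ = 1 := by
        rw [Finpartition.sum_ewensWeight, Finset.card_fin,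
          Real.Gamma_add_nat_eq_mul_ascPochhammer hθ']
        field_simp

/-- The Ewens sampling formula defines a probability distribution on set
partitions of `{1, …, n}`: the weights
`θ^{n(p)} Γ(θ)/Γ(θ+n) ∏_j Γ(e_j)` sum to one over all set partitions `p`. -/
theorem ewens_sampling_formula_sums_to_one (n : ℕ) (hn : 1 ≤ n) (θ : ℝ)
    (hθ : 0 < θ) :
    ∑ p : Finpartition (Finset.univ : Finset (Fin n)),
      θ ^ p.parts.card * Real.Gamma θ / Real.Gamma (θ + n) *
        ∏ C ∈ p.parts, (Nat.factorial (C.card - 1) : ℝ)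
      = 1 :=
  ewens_sampling_formula_sums_to_one_general n θ hθ
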